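/- arXiv:1710.04472 — 4 statements merged into one kernel-verified Lean document; each statement's English description precedes it below -/
import Mathlib

section
/- Let p be a prime and R a commutative ℚ-algebra. Let X(t) = Σ_{n≥0} x_n t^n and C(t) = Σ_{n≥1} (c_n/n) t^n be formal power series in R[[t]] with X = exp(C). Let U be the p-singular part of X, V the p-regular part of X, and Y(t) = V(t)·U(t)^{-1} = Σ_{n≥0} y_n t^n. Then for every n ≥ 1, the coefficient y_n belongs to the ℚ-subalgebra of R generated by the set {c_i : i ≥ 1, p ∤ i}. -/
open PowerSeries

/-- The `p`-singular part of a power series `F = Σ fₙ tⁿ`, namely `Σ_{p ∣ n} fₙ tⁿ`. -/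
noncomputable def pSingularPart {R : Type*} [CommRing R] (p : ℕ) (F : PowerSeries R) :
    PowerSeries R :=
  PowerSeries.mk fun n => if p ∣ n then PowerSeries.coeff n F else 0

/-- The `p`-regular part of a power series `F = Σ fₙ tⁿ`, namely `Σ_{p ∤ n} fₙ tⁿ`. -/
noncomputable def pRegularPart {R : Type*} [CommRing R] (p : ℕ) (F : PowerSeries R) :
    PowerSeries R :=
  PowerSeries.mk fun n => if p ∣ n then 0 else PowerSeries.coeff n F

/-- `exp C = Σ_{k≥0} Cᵏ/k!` for a power series `C` with zero constant term over a
commutative `ℚ`-algebra.  (When the constant term of `C` is zero, `coeff n (C ^ k) = 0`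
for `k > n`, so the truncated sum below computes the full exponential.) -/
noncomputable def psExp {R : Type*} [CommRing R] [Algebra ℚ R] (C : PowerSeries R) :
    PowerSeries R :=
  PowerSeries.mk fun n => ∑ k ∈ Finset.range (n + 1),
    ((k.factorial : ℚ)⁻¹) • PowerSeries.coeff n (C ^ k)

/-!
Split `C` into its `p`-singular and `p`-regular parts, `C = C_s + C_r`. Since `exp` turns sums
into products (both sides solve `F' = C' F`), `X = E_s E_r` with `E_s = exp C_s` supported on
multiples of `p` and `E_r = exp C_r`. Multiplication by such an `E_s` commutes with taking
`p`-singular and `p`-regular parts, so `U = E_s U_r` and `V = E_s V_r` for the parts `U_r`, `V_r`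
of `E_r`, and the unit `E_s` cancels from `Y U = V`. The coefficients of `C_r`, hence those of
`E_r`, `U_r` and `V_r`, lie in the `ℚ`-algebra `A` generated by the `c_i` with `p ∤ i`, and
`U_r` has constant term `1`; solving `Y U_r = V_r` coefficient by coefficient keeps `Y` in `A`.
-/

section

open Finset

variable {R : Type*} [CommRing R]

theorem eq_zero_of_derivative_eq_mul [IsAddTorsionFree R] {F G : R⟦X⟧}
    (hF : d⁄dX R F = G * F) (h0 : constantCoeff F = 0) : F = 0 := by
  ext n
  induction n using Nat.strong_induction_on with
  | _ n ih =>
    rcases n with _ | m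
    · simpa using h0
    have hlow : coeff m (G * F) = 0 := by
      rw [coeff_mul]
      exact sum_eq_zero fun ij hij => by
        rw [ih ij.2 (by linarith [HasAntidiagonal.antidiagonal.snd_le hij]), map_zero, mul_zero]
    rw [← hF, coeff_derivative, ← Nat.cast_succ, mul_comm, ← nsmul_eq_mul] at hlow
    simpa using (smul_eq_zero.mp hlow).resolve_left m.succ_ne_zero

theorem coeff_pow_eq_zero_of_lt {C : R⟦X⟧} (hC : constantCoeff C = 0) {n k : ℕ} (h : n < k) :
    coeff n (C ^ k) = 0 :=
  coeff_of_lt_order n <| (Nat.cast_lt.mpr h).trans_le (le_order_pow_of_constantCoeff_eq_zero k hC)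

section Parts

variable (p : ℕ)

theorem coeff_pSingularPart (n : ℕ) (F : R⟦X⟧) :
    coeff n (pSingularPart p F) = if p ∣ n then coeff n F else 0 :=
  coeff_mk _ _

theorem coeff_pRegularPart (n : ℕ) (F : R⟦X⟧) :
    coeff n (pRegularPart p F) = if p ∣ n then 0 else coeff n F :=
  coeff_mk _ _

theorem constantCoeff_pSingularPart (F : R⟦X⟧) :
    constantCoeff (pSingularPart p F) = constantCoeff F := by
  rw [← coeff_zero_eq_constantCoeff_apply, coeff_pSingularPart, if_pos (dvd_zero p),
    coeff_zero_eq_constantCoeff_apply]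

theorem constantCoeff_pRegularPart (F : R⟦X⟧) : constantCoeff (pRegularPart p F) = 0 := by
  rw [← coeff_zero_eq_constantCoeff_apply, coeff_pRegularPart, if_pos (dvd_zero p)]

theorem pRegularPart_add_pSingularPart (F : R⟦X⟧) :
    pRegularPart p F + pSingularPart p F = F := by
  ext n
  rw [map_add, coeff_pRegularPart, coeff_pSingularPart]
  split_ifs <;> simp

variable (k : Type*) [CommSemiring k] [Algebra k R]

def pSingularSubalgebra : Subalgebra k R⟦X⟧ where
  carrier := {F | ∀ n, ¬ p ∣ n → coeff n F = 0}
  mul_mem' {E F} hE hF n hn := by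
    rw [coeff_mul]
    refine sum_eq_zero fun ij hij => ?_
    rw [← mem_antidiagonal.mp hij] at hn
    by_cases hi : p ∣ ij.1
    · rw [hF _ fun hj => hn (dvd_add hi hj), mul_zero]
    · rw [hE _ hi, zero_mul]
  add_mem' hE hF n hn := by rw [map_add, hE n hn, hF n hn, add_zero]
  algebraMap_mem' r n hn := by
    rw [PowerSeries.algebraMap_apply, coeff_C, if_neg (by rintro rfl; exact hn (dvd_zero p))]

def coeffSubalgebra (A : Subalgebra k R) : Subalgebra k R⟦X⟧ where
  carrier := {F | ∀ n, coeff n F ∈ A}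
  mul_mem' hE hF n := by
    rw [coeff_mul]
    exact sum_mem fun ij _ => mul_mem (hE ij.1) (hF ij.2)
  add_mem' hE hF n := by rw [map_add]; exact add_mem (hE n) (hF n)
  algebraMap_mem' r n := by
    rw [PowerSeries.algebraMap_apply, coeff_C]
    split_ifs
    exacts [A.algebraMap_mem r, zero_mem A]

variable {p k}

theorem pSingularPart_mem_pSingularSubalgebra (F : R⟦X⟧) :
    pSingularPart p F ∈ pSingularSubalgebra p k := fun n hn => by
  rw [coeff_pSingularPart, if_neg hn]

theorem pSingularPart_mem_coeffSubalgebra {A : Subalgebra k R} {F : R⟦X⟧}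
    (hF : F ∈ coeffSubalgebra k A) : pSingularPart p F ∈ coeffSubalgebra k A := fun n => by
  rw [coeff_pSingularPart]
  split_ifs
  exacts [hF n, zero_mem A]

theorem pRegularPart_mem_coeffSubalgebra {A : Subalgebra k R} {F : R⟦X⟧}
    (hF : F ∈ coeffSubalgebra k A) : pRegularPart p F ∈ coeffSubalgebra k A := fun n => by
  rw [coeff_pRegularPart]
  split_ifs
  exacts [zero_mem A, hF n]

theorem coeff_mul_coeff_pSingularPart {E : R⟦X⟧} (hE : E ∈ pSingularSubalgebra p k)
    (F : R⟦X⟧) (i j : ℕ) :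
    coeff i E * coeff j (pSingularPart p F) = if p ∣ i + j then coeff i E * coeff j F else 0 := by
  by_cases hi : p ∣ i
  · simp only [coeff_pSingularPart, Nat.dvd_add_right hi, mul_ite, mul_zero]
  · simp only [hE i hi, zero_mul, ite_self]

theorem pSingularPart_mul {E : R⟦X⟧} (hE : E ∈ pSingularSubalgebra p k) (F : R⟦X⟧) :
    pSingularPart p (E * F) = E * pSingularPart p F := by
  ext n
  rw [coeff_pSingularPart, coeff_mul, coeff_mul]
  simp only [coeff_mul_coeff_pSingularPart hE]
  split_ifs with hn
  · exact sum_congr rfl fun ij hij => by rw [mem_antidiagonal.mp hij, if_pos hn]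
  · exact (sum_eq_zero fun ij hij => by rw [mem_antidiagonal.mp hij, if_neg hn]).symm

theorem pRegularPart_mul {E : R⟦X⟧} (hE : E ∈ pSingularSubalgebra p k) (F : R⟦X⟧) :
    pRegularPart p (E * F) = E * pRegularPart p F := by
  rw [← add_left_inj (pSingularPart p (E * F)), pRegularPart_add_pSingularPart,
    pSingularPart_mul hE, ← mul_add, pRegularPart_add_pSingularPart]

end Parts

theorem mem_coeffSubalgebra_of_mul_mem {k : Type*} [CommRing k] [Algebra k R]
    {A : Subalgebra k R} {U Y : R⟦X⟧} (hU : U ∈ coeffSubalgebra k A) (hU0 : constantCoeff U = 1)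
    (hYU : Y * U ∈ coeffSubalgebra k A) : Y ∈ coeffSubalgebra k A := by
  intro n
  induction n using Nat.strong_induction_on with
  | _ n ih =>
    have hcoeff : coeff n (Y * U) = ∑ i ∈ range n, coeff i Y * coeff (n - i) U + coeff n Y := by
      rw [coeff_mul, Nat.sum_antidiagonal_eq_sum_range_succ_mk, sum_range_succ, Nat.sub_self,
        coeff_zero_eq_constantCoeff_apply, hU0, mul_one]
    rw [eq_sub_of_add_eq' hcoeff.symm]
    exact sub_mem (hYU n) (sum_mem fun i hi => mul_mem (ih i (mem_range.mp hi)) (hU _))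

section Exp

variable [Algebra ℚ R]

noncomputable def expTrunc (N : ℕ) (C : R⟦X⟧) : R⟦X⟧ :=
  ∑ k ∈ range N, (k.factorial : ℚ)⁻¹ • C ^ k

theorem coeff_psExp (n : ℕ) (C : R⟦X⟧) : coeff n (psExp C) = coeff n (expTrunc (n + 1) C) := by
  simp [psExp, expTrunc, map_sum]

theorem coeff_psExp_of_lt {C : R⟦X⟧} (hC : constantCoeff C = 0) {n N : ℕ} (h : n < N) :
    coeff n (psExp C) = coeff n (expTrunc N C) := by
  rw [coeff_psExp, expTrunc, expTrunc, map_sum, map_sum]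
  refine sum_subset (range_subset_range.mpr h) fun k hk hk' => ?_
  rw [mem_range, not_lt] at hk'
  rw [coeff_smul, coeff_pow_eq_zero_of_lt hC hk', smul_zero]

theorem derivative_expTrunc_succ (N : ℕ) (C : R⟦X⟧) :
    d⁄dX R (expTrunc (N + 1) C) = d⁄dX R C * expTrunc N C := by
  rw [expTrunc, sum_range_succ', map_add, map_sum, expTrunc, mul_sum]
  simp only [pow_zero, Derivation.map_smul_of_tower, Derivation.map_one_eq_zero, smul_zero,
    add_zero, derivative_pow, add_tsub_cancel_right]
  refine sum_congr rfl fun k _ => ?_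
  have hfac : ((k + 1).factorial : ℚ)⁻¹ * (k + 1 : ℕ) = (k.factorial : ℚ)⁻¹ := by
    rw [Nat.factorial_succ, Nat.cast_mul]
    field_simp
  rw [mul_assoc, ← nsmul_eq_mul, ← Nat.cast_smul_eq_nsmul ℚ, smul_smul, hfac, mul_comm,
    mul_smul_comm]

theorem constantCoeff_psExp (C : R⟦X⟧) : constantCoeff (psExp C) = 1 := by
  rw [← coeff_zero_eq_constantCoeff_apply, psExp, coeff_mk]
  simp

theorem derivative_psExp {C : R⟦X⟧} (hC : constantCoeff C = 0) :
    d⁄dX R (psExp C) = d⁄dX R C * psExp C := by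
  ext n
  rw [coeff_derivative, coeff_psExp_of_lt hC (Nat.lt_succ_self (n + 1)), ← coeff_derivative,
    derivative_expTrunc_succ, coeff_mul, coeff_mul]
  refine sum_congr rfl fun ij hij => ?_
  rw [← coeff_psExp_of_lt hC (Nat.lt_succ_of_le (HasAntidiagonal.antidiagonal.snd_le hij))]

theorem psExp_add {a b : R⟦X⟧} (ha : constantCoeff a = 0) (hb : constantCoeff b = 0) :
    psExp (a + b) = psExp a * psExp b := by
  have : IsAddTorsionFree R := .of_module_rat R
  refine (sub_eq_zero.mp (eq_zero_of_derivative_eq_mul (G := d⁄dX R (a + b)) ?_ ?_)).symm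
  · rw [map_sub, Derivation.leibniz, derivative_psExp ha, derivative_psExp hb,
      derivative_psExp (by rw [map_add, ha, hb, add_zero]), smul_eq_mul, smul_eq_mul, map_add]
    ring
  · simp [constantCoeff_psExp]

theorem expTrunc_mem {S : Subalgebra ℚ R⟦X⟧} {C : R⟦X⟧} (hC : C ∈ S) (N : ℕ) :
    expTrunc N C ∈ S :=
  sum_mem fun k _ => S.smul_mem (pow_mem hC k) _

theorem psExp_mem_coeffSubalgebra {A : Subalgebra ℚ R} {C : R⟦X⟧}
    (hC : C ∈ coeffSubalgebra ℚ A) : psExp C ∈ coeffSubalgebra ℚ A := fun n => by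
  rw [coeff_psExp]
  exact expTrunc_mem hC (n + 1) n

theorem psExp_mem_pSingularSubalgebra {p : ℕ} {C : R⟦X⟧}
    (hC : C ∈ pSingularSubalgebra p ℚ) : psExp C ∈ pSingularSubalgebra p ℚ := fun n hn => by
  rw [coeff_psExp]
  exact expTrunc_mem hC (n + 1) n hn

theorem pRegularPart_mem_coeffSubalgebra_adjoin (p : ℕ) (C : R⟦X⟧) :
    pRegularPart p C ∈ coeffSubalgebra ℚ
      (Algebra.adjoin ℚ {r : R | ∃ i : ℕ, 1 ≤ i ∧ ¬ p ∣ i ∧ r = (i : R) * coeff i C}) :=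
  fun n => by
    rw [coeff_pRegularPart]
    split_ifs with hn
    · exact zero_mem _
    have hn0 : n ≠ 0 := by rintro rfl; exact hn (dvd_zero p)
    have hgen : (n : R) * coeff n C ∈
        Algebra.adjoin ℚ {r : R | ∃ i : ℕ, 1 ≤ i ∧ ¬ p ∣ i ∧ r = (i : R) * coeff i C} :=
      Algebra.subset_adjoin ⟨n, Nat.one_le_iff_ne_zero.mpr hn0, hn, rfl⟩
    rw [← nsmul_eq_mul, ← Nat.cast_smul_eq_nsmul ℚ] at hgen
    simpa [smul_smul, hn0] using Subalgebra.smul_mem _ hgen (n : ℚ)⁻¹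

end Exp

end

theorem stmt1_general (p : ℕ) (R : Type*) [CommRing R] [Algebra ℚ R]
    (C X Y : PowerSeries R)
    (hC : PowerSeries.constantCoeff C = 0)
    (hX : X = psExp C)
    (hY : Y * pSingularPart p X = pRegularPart p X) :
    ∀ n : ℕ, 1 ≤ n → PowerSeries.coeff n Y ∈
      Algebra.adjoin ℚ
        {r : R | ∃ i : ℕ, 1 ≤ i ∧ ¬ p ∣ i ∧ r = (i : R) * PowerSeries.coeff i C} := by
  intro n _
  set Es := psExp (pSingularPart p C)
  set Er := psExp (pRegularPart p C)
  have hsplit : X = Es * Er := by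
    rw [hX, ← psExp_add (by rwa [constantCoeff_pSingularPart]) (constantCoeff_pRegularPart p C),
      add_comm, pRegularPart_add_pSingularPart]
  have hEs : Es ∈ pSingularSubalgebra p ℚ :=
    psExp_mem_pSingularSubalgebra (pSingularPart_mem_pSingularSubalgebra C)
  have hEr := psExp_mem_coeffSubalgebra (pRegularPart_mem_coeffSubalgebra_adjoin p C)
  have hEs_unit : IsUnit Es := by
    rw [isUnit_iff_constantCoeff, constantCoeff_psExp]
    exact isUnit_one
  have hYEr : Y * pSingularPart p Er = pRegularPart p Er := by
    apply hEs_unit.mul_left_cancel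
    rw [mul_left_comm, ← pSingularPart_mul hEs, ← pRegularPart_mul hEs, ← hsplit, hY]
  refine mem_coeffSubalgebra_of_mul_mem (pSingularPart_mem_coeffSubalgebra hEr) ?_
    (hYEr ▸ pRegularPart_mem_coeffSubalgebra hEr) n
  rw [constantCoeff_pSingularPart, constantCoeff_psExp]

/-- with `X = exp C`, `C = Σ_{n≥1} (cₙ/n) tⁿ` (so `cₙ = n · coeff n C`),
`U`/`V` the `p`-singular/`p`-regular parts of `X` and `Y = V·U⁻¹ = Σ yₙ tⁿ`,
every `yₙ` (`n ≥ 1`) lies in the `ℚ`-subalgebra of `R` generated by `{cᵢ : i ≥ 1, p ∤ i}`. -/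
theorem stmt1 (p : ℕ) (hp : p.Prime) (R : Type*) [CommRing R] [Algebra ℚ R]
    (C X Y : PowerSeries R)
    (hC : PowerSeries.constantCoeff C = 0)
    (hX : X = psExp C)
    (hY : Y * pSingularPart p X = pRegularPart p X) :
    ∀ n : ℕ, 1 ≤ n → PowerSeries.coeff n Y ∈
      Algebra.adjoin ℚ
        {r : R | ∃ i : ℕ, 1 ≤ i ∧ ¬ p ∣ i ∧ r = (i : R) * PowerSeries.coeff i C} :=
  stmt1_general p R C X Y hC hX hY
end

section
/- Let p be a prime. In the polynomial ring A = ℚ[x_1, x_2, x_3, …] (a polynomial variable x_n for each integer n ≥ 1), form the power series X(t) = 1 + Σ_{n≥1} x_n t^n ∈ A[[t]], let U and V be its p-singular and p-regular parts, and set Y(t) = V(t)·U(t)^{-1} = Σ_{n≥0} y_n t^n. Then the family (y_n), indexed by the integers n ≥ 1 with p ∤ n, is algebraically independent over ℚ. (Together with the intersection statement ℤ[x] ∩ ℚ[y_n : p∤n] = ℤ[y_n : p∤n], this shows that K_0^{𝔽_p}(S_∞) is a polynomial ring with one generator in each degree prime to p.) -/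
open PowerSeries

/-!
Sending every variable `x_m` with `p ∣ m` to `0` turns the `p`-singular part `U` of `X` into `1`,
so `Y = V · U⁻¹` specializes to the `p`-regular part of the specialized `X`. Hence each `y_n`
with `p ∤ n` specializes to the variable `x_n`, and a family whose image under an algebra map
is algebraically independent is itself algebraically independent.
-/

namespace PowerSeries

variable {R S : Type*} [CommRing R] [CommRing S] (p : ℕ)

@[simp]
theorem coeff_pSingularPart (F : R⟦X⟧) (n : ℕ) :
    coeff n (pSingularPart p F) = if p ∣ n then coeff n F else 0 :=
  coeff_mk _ _

@[simp]
theorem coeff_pRegularPart (F : R⟦X⟧) (n : ℕ) :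
    coeff n (pRegularPart p F) = if p ∣ n then 0 else coeff n F :=
  coeff_mk _ _

theorem map_pSingularPart (f : R →+* S) (F : R⟦X⟧) :
    map f (pSingularPart p F) = pSingularPart p (map f F) := by
  ext n
  simp only [coeff_map, coeff_pSingularPart, apply_ite f, map_zero]

theorem map_pRegularPart (f : R →+* S) (F : R⟦X⟧) :
    map f (pRegularPart p F) = pRegularPart p (map f F) := by
  ext n
  simp only [coeff_map, coeff_pRegularPart, apply_ite f, map_zero]

theorem pSingularPart_eq_one {F : R⟦X⟧} (h₀ : constantCoeff F = 1)
    (hF : ∀ n, 0 < n → p ∣ n → coeff n F = 0) : pSingularPart p F = 1 := by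
  ext n
  rcases Nat.eq_zero_or_pos n with rfl | hn
  · simp [h₀]
  · simp only [coeff_pSingularPart, coeff_one, if_neg hn.ne']
    split_ifs with hpn
    exacts [hF n hn hpn, rfl]

end PowerSeries

namespace MvPolynomial

variable (R : Type*) [CommRing R] (p : ℕ)

noncomputable def genericSeries : PowerSeries (MvPolynomial ℕ+ R) :=
  PowerSeries.mk fun n => if h : 0 < n then X (⟨n, h⟩ : ℕ+) else 1

variable {R}

noncomputable def killDivisibleVars : MvPolynomial ℕ+ R →ₐ[R] MvPolynomial ℕ+ R :=
  aeval fun m => if p ∣ (m : ℕ) then 0 else X m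

theorem killDivisibleVars_X (m : ℕ+) :
    killDivisibleVars p (X m : MvPolynomial ℕ+ R) = if p ∣ (m : ℕ) then 0 else X m :=
  aeval_X _ _

theorem coeff_map_killDivisibleVars_genericSeries {n : ℕ} (hn : 0 < n) :
    PowerSeries.coeff n (PowerSeries.map (killDivisibleVars p).toRingHom (genericSeries R)) =
      if p ∣ n then 0 else X (⟨n, hn⟩ : ℕ+) := by
  simp only [genericSeries, PowerSeries.coeff_map, PowerSeries.coeff_mk, dif_pos hn,
    AlgHom.toRingHom_eq_coe, RingHom.coe_coe]
  exact killDivisibleVars_X p _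

theorem pSingularPart_map_killDivisibleVars_genericSeries :
    pSingularPart p (PowerSeries.map (killDivisibleVars p).toRingHom (genericSeries R)) = 1 := by
  refine PowerSeries.pSingularPart_eq_one p ?_ fun n hn hpn => ?_
  · simp [genericSeries, ← PowerSeries.coeff_zero_eq_constantCoeff_apply]
  · exact (coeff_map_killDivisibleVars_genericSeries p hn).trans (if_pos hpn)

theorem killDivisibleVars_coeff_of_mul_pSingularPart_eq {Y : PowerSeries (MvPolynomial ℕ+ R)}
    (hY : Y * pSingularPart p (genericSeries R) = pRegularPart p (genericSeries R))
    {n : ℕ} (hn : 0 < n) (hpn : ¬p ∣ n) :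
    killDivisibleVars p (PowerSeries.coeff n Y) = X (⟨n, hn⟩ : ℕ+) := by
  have hσY : PowerSeries.map (killDivisibleVars p).toRingHom Y =
      pRegularPart p (PowerSeries.map (killDivisibleVars p).toRingHom (genericSeries R)) := by
    simpa only [map_mul, PowerSeries.map_pSingularPart, PowerSeries.map_pRegularPart,
      pSingularPart_map_killDivisibleVars_genericSeries, mul_one]
      using congrArg (PowerSeries.map (killDivisibleVars p).toRingHom) hY
  change PowerSeries.coeff n (PowerSeries.map (killDivisibleVars p).toRingHom Y) = _
  rw [hσY, PowerSeries.coeff_pRegularPart, if_neg hpn,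
    coeff_map_killDivisibleVars_genericSeries p hn, if_neg hpn]

end MvPolynomial

theorem stmt7_general (p : ℕ)
    (X Y : PowerSeries (MvPolynomial ℕ+ ℚ))
    (hX : X = PowerSeries.mk fun n =>
      if h : 0 < n then MvPolynomial.X (⟨n, h⟩ : ℕ+) else 1)
    (hY : Y * pSingularPart p X = pRegularPart p X) :
    AlgebraicIndependent ℚ
      (fun i : {n : ℕ // 1 ≤ n ∧ ¬ p ∣ n} =>
        PowerSeries.coeff (i : ℕ) Y) := by
  obtain rfl : X = MvPolynomial.genericSeries ℚ := hX
  have hinj : Function.Injective fun i : {n : ℕ // 1 ≤ n ∧ ¬ p ∣ n} => (⟨i, i.2.1⟩ : ℕ+) :=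
    fun a b hab => Subtype.ext (congrArg PNat.val hab)
  refine AlgebraicIndependent.of_comp (MvPolynomial.killDivisibleVars p) ?_
  convert (MvPolynomial.algebraicIndependent_X ℕ+ ℚ).comp _ hinj
  exact funext fun i =>
    MvPolynomial.killDivisibleVars_coeff_of_mul_pSingularPart_eq p hY i.2.1 i.2.2

/-- in `A = ℚ[x₁, x₂, …]` (variables indexed by `ℕ+`), with
`X(t) = 1 + Σ_{n≥1} xₙ tⁿ`, `U`,`V` its `p`-singular/`p`-regular parts and
`Y = V·U⁻¹ = Σ yₙ tⁿ`, the family `(yₙ)` indexed by the `n ≥ 1` with `p ∤ n` is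
algebraically independent over `ℚ`. -/
theorem stmt7 (p : ℕ) (hp : p.Prime)
    (X Y : PowerSeries (MvPolynomial ℕ+ ℚ))
    (hX : X = PowerSeries.mk fun n =>
      if h : 0 < n then MvPolynomial.X (⟨n, h⟩ : ℕ+) else 1)
    (hY : Y * pSingularPart p X = pRegularPart p X) :
    AlgebraicIndependent ℚ
      (fun i : {n : ℕ // 1 ≤ n ∧ ¬ p ∣ n} =>
        PowerSeries.coeff (i : ℕ) Y) :=
  stmt7_general p X Y hX hY
end

section
/- Let p be a prime, let N ≥ M ≥ 1 be integers, and let Φ = (φ_{j,k}) ∈ GL_N(ℤ). Let A = ℚ[x_{j,i} : j ∈ {1,…,N}, i ≥ 1] and, in A[[t]], put F_j(t) = 1 + Σ_{i≥1} x_{j,i} t^i for each j (invertible since its constant term is 1). For each k ∈ {1,…,M} set X_k(t) = ∏_{j=1}^N F_j(t)^{φ_{j,k}} (integer, possibly negative, exponents), let U_k and V_k be the p-singular and p-regular parts of X_k, and set Y_k(t) = V_k(t)·U_k(t)^{-1} = Σ_{n≥0} y_{k,n} t^n. Then the intersection (inside A) of the ℤ-subalgebra generated by all the variables {x_{j,i}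 : j ∈ {1,…,N}, i ≥ 1} with the ℚ-subalgebra generated by {y_{k,n} : 1 ≤ k ≤ M, n ≥ 1, p ∤ n} equals the ℤ-subalgebra generated by {y_{k,n} : 1 ≤ k ≤ M, n ≥ 1, p ∤ n}. (This is the algebraic core of the theorem that, for a finite group G with splitting field k of characteristic p, the Grothendieck ring K_0^k(G≀S_∞) of projective modular representations of wreath products G≀S_n is the polynomial ring ℤ[y_{k,n} : 1 ≤ k ≤ M, p ∤ n].) -/
/-!
Say `x_{j,i}` has level `i`, and let `g_{k,n}` be `y_{k,n}` when `k < M` and `p ∤ n`, and the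
`tⁿ`-coefficient of `X_k` otherwise. All series involved have constant term `1` (or `0`), so the
`tⁿ`-coefficient of a product is that of the factors plus products of lower coefficients, which are
integral polynomials in variables of level `< n`. Modulo those, therefore,
`g_{k,n} ≡ Σ_j φ_{j,k} x_{j,n}`, and as `Φ⁻¹` is integral, the `g`'s of level `< n` generate the
same `ℤ`-algebra as the `x`'s of level `< n`. So `x ↦ g` restricts to a surjective, hence (by
Noetherianity) injective, `ℚ`-endomorphism of each polynomial ring in the variables of level `< n`:
the `g`'s are algebraically independent, and the claim reduces to `ℤ[x] ∩ ℚ[x_T] = ℤ[x_T]`.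
-/

open PowerSeries

theorem RingHom.injective_of_surjective_of_isNoetherianRing {A : Type*} [CommRing A]
    [IsNoetherianRing A] (f : A →+* A) (hf : Function.Surjective f) : Function.Injective f := by
  let ker : ℕ →o Ideal A := ⟨fun n => RingHom.ker (f ^ n), fun m n hmn x hx => by
    obtain ⟨k, rfl⟩ := Nat.exists_eq_add_of_le' hmn
    simp_all [RingHom.mem_ker, Function.iterate_add_apply]⟩
  obtain ⟨n, hn⟩ := monotone_stabilizes_iff_noetherian.mpr inferInstance ker
  have hstable : RingHom.ker (f ^ (n + 1)) = RingHom.ker (f ^ n) := (hn (n + 1) n.le_succ).symm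
  refine (injective_iff_map_eq_zero f).mpr fun x hx => ?_
  obtain ⟨y, rfl⟩ := hf.iterate n x
  have hy : y ∈ RingHom.ker (f ^ (n + 1)) := by
    simpa [RingHom.mem_ker, Function.iterate_succ_apply'] using hx
  simpa [hstable, RingHom.mem_ker] using hy

theorem Algebra.adjoin_le_restrictScalars_adjoin (R S : Type*) {A : Type*} [CommSemiring R]
    [CommSemiring S] [Semiring A] [Algebra R S] [Algebra S A] [Algebra R A]
    [IsScalarTower R S A] (s : Set A) :
    Algebra.adjoin R s ≤ (Algebra.adjoin S s).restrictScalars R :=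
  Algebra.adjoin_le Algebra.subset_adjoin

theorem Algebra.adjoin_eq_of_adjoin_eq_of_isScalarTower {R S A : Type*} [CommSemiring R]
    [CommSemiring S] [Semiring A] [Algebra R S] [Algebra S A] [Algebra R A]
    [IsScalarTower R S A] {s t : Set A} (h : Algebra.adjoin R s = Algebra.adjoin R t) :
    Algebra.adjoin S s = Algebra.adjoin S t := by
  have key (u v : Set A) (h : Algebra.adjoin R u = Algebra.adjoin R v) :
      Algebra.adjoin S v ≤ Algebra.adjoin S u :=
    Algebra.adjoin_le fun _ hx =>
      adjoin_le_restrictScalars_adjoin R S u (h ▸ Algebra.subset_adjoin hx)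
  exact le_antisymm (key t s h.symm) (key s t h)

namespace MvPolynomial

variable {σ : Type*}

theorem map_restrictScalars_aeval_adjoin_X_image (R : Type*) {S A : Type*} [CommSemiring R]
    [CommSemiring S] [CommSemiring A] [Algebra R S] [Algebra S A] [Algebra R A]
    [IsScalarTower R S A] (g : σ → A) (U : Set σ) :
    (Algebra.adjoin R (X '' U)).map ((aeval (R := S) g).restrictScalars R) =
      Algebra.adjoin R (g '' U) := by
  rw [AlgHom.map_adjoin, Set.image_image]
  simp

theorem injOn_aeval_supported {R : Type*} [CommRing R] [IsNoetherianRing R]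
    {g : σ → MvPolynomial σ R} {s : Set σ} (hs : s.Finite)
    (hg : Algebra.adjoin R (g '' s) = supported R s) :
    Set.InjOn (aeval g) (supported R s : Set (MvPolynomial σ R)) := by
  have hmap : (supported R s).map (aeval g) = supported R s :=
    (map_restrictScalars_aeval_adjoin_X_image R (S := R) g s).trans hg
  let ψ : supported R s →ₐ[R] supported R s :=
    ((aeval g).comp (supported R s).val).codRestrict _ fun x =>
      hmap.le (Subalgebra.mem_map.mpr ⟨x, x.2, rfl⟩)
  have : Finite s := hs.to_subtype
  have : IsNoetherianRing (supported R s) :=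
    isNoetherianRing_of_ringEquiv _ (supportedEquivMvPolynomial s).symm.toRingEquiv
  have hψ : Function.Surjective ψ := fun y => by
    obtain ⟨x, hx, hxy⟩ := Subalgebra.mem_map.mp (hmap.ge y.2)
    exact ⟨⟨x, hx⟩, Subtype.ext hxy⟩
  intro x hx y hy hxy
  simpa using RingHom.injective_of_surjective_of_isNoetherianRing (ψ : _ →+* _) hψ
    (a₁ := ⟨x, hx⟩) (a₂ := ⟨y, hy⟩) (Subtype.ext hxy)

theorem aeval_injective_of_adjoin_image_eq_supported {R ι : Type*} [CommRing R]
    [IsNoetherianRing R] {g : σ → MvPolynomial σ R} (s : ι → Set σ)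
    (hs : ∀ i, (s i).Finite) (hcover : ∀ t : Finset σ, ∃ i, ↑t ⊆ s i)
    (hg : ∀ i, Algebra.adjoin R (g '' s i) = supported R (s i)) :
    Function.Injective (aeval (R := R) g) := by
  classical
  intro P Q hPQ
  obtain ⟨i, hi⟩ := hcover (P.vars ∪ Q.vars)
  rw [Finset.coe_union, Set.union_subset_iff] at hi
  exact injOn_aeval_supported (hs i) (hg i) (mem_supported.mpr hi.1) (mem_supported.mpr hi.2) hPQ

theorem mem_adjoin_int_X_image {T : Set σ} {a : MvPolynomial σ ℚ}
    (hZ : a ∈ Algebra.adjoin ℤ (Set.range X)) (hQ : a ∈ supported ℚ T) :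
    a ∈ Algebra.adjoin ℤ (X '' T) := by
  let φ : MvPolynomial σ ℤ →ₐ[ℤ] MvPolynomial σ ℚ := (map (Int.castRingHom ℚ)).toIntAlgHom
  have hφ (U : Set σ) : (Algebra.adjoin ℤ (X '' U)).map φ = Algebra.adjoin ℤ (X '' U) := by
    rw [AlgHom.map_adjoin, Set.image_image]
    congr 2
    funext i
    exact map_X _ i
  rw [← Set.image_univ, ← hφ] at hZ
  obtain ⟨b, -, rfl⟩ := hZ
  rw [← hφ]
  refine ⟨b, ?_, rfl⟩
  change b ∈ supported ℤ T
  rw [mem_supported] at hQ ⊢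
  rwa [← vars_map_of_injective (p := b) (Int.castRingHom ℚ).injective_int]

theorem adjoin_int_range_X_inter_adjoin_rat_image {g : σ → MvPolynomial σ ℚ}
    (hinj : Function.Injective (aeval (R := ℚ) g))
    (hZ : Algebra.adjoin ℤ (Set.range g) = Algebra.adjoin ℤ (Set.range X)) (T : Set σ) :
    (Algebra.adjoin ℤ (Set.range (X : σ → MvPolynomial σ ℚ)) : Set (MvPolynomial σ ℚ)) ∩
        Algebra.adjoin ℚ (g '' T) = Algebra.adjoin ℤ (g '' T) := by
  ext a
  constructor
  · rintro ⟨haZ, haQ⟩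
    rw [← hZ, ← Set.image_univ, ← map_restrictScalars_aeval_adjoin_X_image ℤ (S := ℚ)]
      at haZ
    obtain ⟨b, hbZ, rfl⟩ := haZ
    rw [SetLike.mem_coe, ← map_restrictScalars_aeval_adjoin_X_image ℚ (S := ℚ)] at haQ
    obtain ⟨b', hb'Q, hb'⟩ := haQ
    obtain rfl : b' = b := hinj hb'
    rw [SetLike.mem_coe, ← map_restrictScalars_aeval_adjoin_X_image ℤ (S := ℚ)]
    exact ⟨b', mem_adjoin_int_X_image (by rwa [Set.image_univ] at hbZ) hb'Q, rfl⟩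
  · intro ha
    exact ⟨hZ ▸ Algebra.adjoin_mono (Set.image_subset_range g T) ha,
      Algebra.adjoin_le_restrictScalars_adjoin ℤ ℚ (g '' T) ha⟩

end MvPolynomial

namespace LevelFiltration

variable {ι R : Type*} [CommRing R]

local notation "𝔸" => MvPolynomial (ι × ℕ+) R

noncomputable def belowLevel (n : ℕ) : Subalgebra ℤ 𝔸 :=
  Algebra.adjoin ℤ (MvPolynomial.X '' {w | (w.2 : ℕ) < n})

theorem belowLevel_mono {m n : ℕ} (h : m ≤ n) :
    (belowLevel m : Subalgebra ℤ 𝔸) ≤ belowLevel n :=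
  Algebra.adjoin_mono (Set.image_mono fun _ hw => lt_of_lt_of_le hw h)

theorem X_mem_belowLevel {w : ι × ℕ+} {n : ℕ} (h : (w.2 : ℕ) < n) :
    (MvPolynomial.X w : 𝔸) ∈ belowLevel n :=
  Algebra.subset_adjoin ⟨w, h, rfl⟩

theorem coeff_mul_sub_mem_belowLevel {f g : PowerSeries 𝔸} {n : ℕ} (hn : n ≠ 0)
    (hf : ∀ a < n, coeff a f ∈ belowLevel (a + 1))
    (hg : ∀ b < n, coeff b g ∈ belowLevel (b + 1)) :
    coeff n (f * g) - (constantCoeff f * coeff n g + coeff n f * constantCoeff g) ∈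
      belowLevel n := by
  set f₀ := constantCoeff f
  set g₀ := constantCoeff g
  have hsplit : f * g - (PowerSeries.C f₀ * g + PowerSeries.C g₀ * f) =
      (f - PowerSeries.C f₀) * (g - PowerSeries.C g₀) - PowerSeries.C (f₀ * g₀) := by
    rw [map_mul]
    ring
  have hcoeff := congrArg (coeff n) hsplit
  simp only [map_sub, map_add, PowerSeries.coeff_C_mul, PowerSeries.coeff_C, if_neg hn,
    sub_zero] at hcoeff
  rw [mul_comm (coeff n f), hcoeff, coeff_mul]
  refine Subalgebra.sum_mem _ fun q hq => ?_
  rw [Finset.HasAntidiagonal.mem_antidiagonal] at hq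
  rcases eq_or_ne q.1 0 with h₁ | h₁
  · simp [h₁, f₀]
  rcases eq_or_ne q.2 0 with h₂ | h₂
  · simp [h₂, g₀]
  rw [map_sub, map_sub, PowerSeries.coeff_C, PowerSeries.coeff_C, if_neg h₁, if_neg h₂,
    sub_zero, sub_zero]
  exact mul_mem (belowLevel_mono (by omega) (hf q.1 (by omega)))
    (belowLevel_mono (by omega) (hg q.2 (by omega)))

theorem coeff_mem_belowLevel_of_mul_eq {U V Y : PowerSeries 𝔸} (hYUV : Y * U = V)
    (hU₀ : constantCoeff U = 1) (hU : ∀ n, coeff n U ∈ belowLevel (n + 1))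
    (hV : ∀ n, coeff n V ∈ belowLevel (n + 1)) (hY₀ : constantCoeff Y ∈ belowLevel 1)
    (n : ℕ) :
    coeff n Y ∈ belowLevel (n + 1) := by
  induction n using Nat.strong_induction_on with
  | _ n ih =>
    rcases eq_or_ne n 0 with rfl | hn
    · simpa using hY₀
    have h := coeff_mul_sub_mem_belowLevel hn ih fun b _ => hU b
    rw [hYUV, hU₀, mul_one] at h
    rw [show coeff n Y = coeff n V - constantCoeff Y * coeff n U -
        (coeff n V - (constantCoeff Y * coeff n U + coeff n Y)) by ring]
    exact sub_mem (sub_mem (hV n) (mul_mem (belowLevel_mono (by omega) hY₀) (hU n)))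
      (belowLevel_mono n.le_succ h)

theorem adjoin_range_eq_adjoin_range_X {g : ι × ℕ+ → 𝔸}
    (hg : ∀ n, Algebra.adjoin ℤ (g '' {w | (w.2 : ℕ) < n}) = belowLevel n) :
    Algebra.adjoin ℤ (Set.range g) = Algebra.adjoin ℤ (Set.range MvPolynomial.X) := by
  have hcover : ⋃ n, {w : ι × ℕ+ | (w.2 : ℕ) < n} = Set.univ :=
    Set.iUnion_eq_univ_iff.mpr fun w => ⟨w.2 + 1, Nat.lt_succ_self _⟩
  rw [← Set.image_univ, ← Set.image_univ (f := MvPolynomial.X), ← hcover, Set.image_iUnion,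
    Set.image_iUnion, Algebra.adjoin_iUnion, Algebra.adjoin_iUnion]
  simp_rw [hg]
  rfl

theorem aeval_injective_of_adjoin_image_eq_belowLevel [Finite ι] [IsNoetherianRing R]
    {g : ι × ℕ+ → 𝔸}
    (hg : ∀ n, Algebra.adjoin ℤ (g '' {w | (w.2 : ℕ) < n}) = belowLevel n) :
    Function.Injective (MvPolynomial.aeval (R := R) g) := by
  refine MvPolynomial.aeval_injective_of_adjoin_image_eq_supported
    (fun n => {w : ι × ℕ+ | (w.2 : ℕ) < n}) (fun n => ?_) (fun t => ?_)
    fun n => Algebra.adjoin_eq_of_adjoin_eq_of_isScalarTower (hg n)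
  · exact (Set.finite_univ.prod ((Set.finite_lt_nat n).preimage PNat.coe_injective.injOn)).subset
      fun w hw => ⟨trivial, hw⟩
  · refine ⟨t.sup (fun w => (w.2 : ℕ)) + 1, fun w hw => Nat.lt_succ_of_le ?_⟩
    exact Finset.le_sup (f := fun w => (w.2 : ℕ)) hw

variable [Fintype ι]

noncomputable def linearForm (n : ℕ+) : (ι → ℤ) →ₗ[ℤ] 𝔸 :=
  Fintype.linearCombination ℤ fun i => MvPolynomial.X (i, n)

theorem linearForm_mem_belowLevel (c : ι → ℤ) {n : ℕ+} {m : ℕ} (h : (n : ℕ) < m) :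
    (linearForm n c : 𝔸) ∈ belowLevel m :=
  Subalgebra.sum_mem _ fun _ _ => zsmul_mem (X_mem_belowLevel h) _

structure HasLinearPart (f : PowerSeries 𝔸) (c : ι → ℤ) : Prop where
  constantCoeff_eq_one : constantCoeff f = 1
  coeff_sub_mem : ∀ n : ℕ+, coeff n f - linearForm n c ∈ belowLevel n

namespace HasLinearPart

variable {f g : PowerSeries (MvPolynomial (ι × ℕ+) R)} {c d : ι → ℤ}

theorem coeff_mem (hf : HasLinearPart f c) (n : ℕ) : coeff n f ∈ belowLevel (n + 1) := by
  rcases Nat.eq_zero_or_pos n with rfl | hn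
  · simp [hf.constantCoeff_eq_one]
  rw [← sub_add_cancel (coeff n f) (linearForm ⟨n, hn⟩ c)]
  exact add_mem (belowLevel_mono n.le_succ (hf.coeff_sub_mem ⟨n, hn⟩))
    (linearForm_mem_belowLevel c n.lt_succ_self)

theorem one : HasLinearPart (1 : PowerSeries 𝔸) 0 where
  constantCoeff_eq_one := map_one _
  coeff_sub_mem n := by simp [coeff_one, n.ne_zero]

theorem mul (hf : HasLinearPart f c) (hg : HasLinearPart g d) :
    HasLinearPart (f * g) (c + d) where
  constantCoeff_eq_one := by
    rw [map_mul, hf.constantCoeff_eq_one, hg.constantCoeff_eq_one, one_mul]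
  coeff_sub_mem n := by
    have h := coeff_mul_sub_mem_belowLevel n.ne_zero (fun a _ => hf.coeff_mem a)
      fun b _ => hg.coeff_mem b
    rw [hf.constantCoeff_eq_one, hg.constantCoeff_eq_one, one_mul, mul_one] at h
    rw [map_add, show coeff n (f * g) - (linearForm n c + linearForm n d) =
      (coeff n (f * g) - (coeff n g + coeff n f)) + (coeff n f - linearForm n c) +
        (coeff n g - linearForm n d) by ring]
    exact add_mem (add_mem h (hf.coeff_sub_mem n)) (hg.coeff_sub_mem n)

theorem of_mul_eq_one (hf : HasLinearPart f c) (hgf : g * f = 1) : HasLinearPart g (-c) := by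
  have hg₀ : constantCoeff g = 1 := by
    simpa [hf.constantCoeff_eq_one] using congrArg constantCoeff hgf
  have hg : ∀ n, coeff n g ∈ belowLevel (n + 1) :=
    coeff_mem_belowLevel_of_mul_eq hgf hf.constantCoeff_eq_one hf.coeff_mem
      (fun n => by rw [coeff_one]; split_ifs <;> simp) (by simp [hg₀])
  refine ⟨hg₀, fun n => ?_⟩
  have h := coeff_mul_sub_mem_belowLevel n.ne_zero (fun a _ => hg a) fun b _ => hf.coeff_mem b
  rw [hgf, hg₀, hf.constantCoeff_eq_one, one_mul, mul_one, coeff_one, if_neg n.ne_zero] at h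
  rw [map_neg, sub_neg_eq_add, show coeff n g + linearForm n c =
    -(0 - (coeff n f + coeff n g)) - (coeff n f - linearForm n c) by ring]
  exact sub_mem (neg_mem h) (hf.coeff_sub_mem n)

theorem pow (hf : HasLinearPart f c) (m : ℕ) : HasLinearPart (f ^ m) (m • c) := by
  induction m with
  | zero => simpa using one
  | succ m ih => rw [pow_succ, succ_nsmul]; exact ih.mul hf

theorem zpow {u : (PowerSeries 𝔸)ˣ} (hu : HasLinearPart (u : PowerSeries 𝔸) c) (m : ℤ) :
    HasLinearPart ((u ^ m : (PowerSeries 𝔸)ˣ) : PowerSeries 𝔸) (m • c) := by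
  rcases m with m | m
  · simpa using hu.pow m
  · rw [zpow_negSucc, negSucc_zsmul]
    have hpow := hu.pow (m + 1)
    rw [← Units.val_pow_eq_pow_val] at hpow
    exact hpow.of_mul_eq_one (Units.inv_mul _)

theorem prod {κ : Type*} (s : Finset κ) {f : κ → PowerSeries 𝔸} {c : κ → ι → ℤ}
    (h : ∀ k ∈ s, HasLinearPart (f k) (c k)) :
    HasLinearPart (∏ k ∈ s, f k) (∑ k ∈ s, c k) := by
  classical
  induction s using Finset.induction_on with
  | empty => simpa using one
  | insert k s hk ih =>
    rw [Finset.prod_insert hk, Finset.sum_insert hk]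
    exact (h k (s.mem_insert_self k)).mul (ih fun l hl => h l (Finset.mem_insert_of_mem hl))

theorem coeff_sub_mem_of_mul_pSingularPart {y : PowerSeries 𝔸} {p : ℕ}
    (hf : HasLinearPart f c) (hy : y * pSingularPart p f = pRegularPart p f) (n : ℕ+)
    (hpn : ¬ p ∣ n) : coeff n y - linearForm n c ∈ belowLevel n := by
  have hU (m : ℕ) : coeff m (pSingularPart p f) = if p ∣ m then coeff m f else 0 :=
    coeff_mk _ _
  have hV (m : ℕ) : coeff m (pRegularPart p f) = if p ∣ m then 0 else coeff m f :=
    coeff_mk _ _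
  have hU₀ : constantCoeff (pSingularPart p f) = 1 := by
    rw [← coeff_zero_eq_constantCoeff_apply, hU, if_pos (dvd_zero p),
      coeff_zero_eq_constantCoeff_apply, hf.constantCoeff_eq_one]
  have hy₀ : constantCoeff y = 0 := by
    have h₀ := congrArg constantCoeff hy
    rw [map_mul, hU₀, mul_one] at h₀
    rw [h₀, ← coeff_zero_eq_constantCoeff_apply, hV, if_pos (dvd_zero p)]
  have hUmem (m : ℕ) : coeff m (pSingularPart p f) ∈ belowLevel (m + 1) := by
    rw [hU]
    split_ifs
    exacts [hf.coeff_mem m, zero_mem _]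
  have hymem := coeff_mem_belowLevel_of_mul_eq hy hU₀ hUmem
    (fun m => by rw [hV]; split_ifs; exacts [zero_mem _, hf.coeff_mem m]) (by simp [hy₀])
  have h := coeff_mul_sub_mem_belowLevel n.ne_zero (fun a _ => hymem a) fun b _ => hUmem b
  rw [hy, hy₀, hU₀, hV, if_neg hpn, zero_mul, zero_add, mul_one] at h
  rw [show coeff n y - linearForm n c =
    (coeff n f - linearForm n c) - (coeff n f - coeff n y) by ring]
  exact sub_mem (hf.coeff_sub_mem n) h

end HasLinearPart

variable [DecidableEq ι]

theorem hasLinearPart_generatingSeries (j : ι) :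
    HasLinearPart (mk fun i => if h : 0 < i then (MvPolynomial.X (j, ⟨i, h⟩) : 𝔸) else 1)
      (Pi.single j 1) where
  constantCoeff_eq_one := by simp [← coeff_zero_eq_constantCoeff_apply]
  coeff_sub_mem n := by
    have : coeff n (mk fun i => if h : 0 < i then (MvPolynomial.X (j, ⟨i, h⟩) : 𝔸) else 1) =
        MvPolynomial.X (j, n) := by
      rw [coeff_mk, dif_pos n.pos]
      rfl
    simp [this, linearForm]

theorem hasLinearPart_prod_zpow {F : ι → (PowerSeries 𝔸)ˣ}
    (hF : ∀ j, HasLinearPart (F j : PowerSeries 𝔸) (Pi.single j 1)) (e : ι → ℤ) :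
    HasLinearPart ((∏ j, F j ^ e j : (PowerSeries 𝔸)ˣ) : PowerSeries 𝔸) e := by
  have he : ∑ j, e j • Pi.single j (1 : ℤ) = e := by
    ext i
    simp [Finset.sum_apply, Pi.single_apply]
  have hprod := HasLinearPart.prod Finset.univ fun j _ => (hF j).zpow (e j)
  rwa [he, ← Units.coe_prod] at hprod

theorem sum_inv_smul_linearForm_col {Φ : Matrix ι ι ℤ} (hΦ : IsUnit Φ.det) (j : ι)
    (n : ℕ+) :
    ∑ k, Φ⁻¹ k j • linearForm n (fun i => Φ i k) = (MvPolynomial.X (j, n) : 𝔸) := by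
  have hcol : ∑ k, Φ⁻¹ k j • (fun i => Φ i k) = Pi.single j 1 := by
    ext i
    simpa [Finset.sum_apply, Matrix.mul_apply, mul_comm, Matrix.one_apply, Pi.single_apply] using
      congrFun (congrFun (Matrix.mul_nonsing_inv Φ hΦ) i) j
  simp_rw [← map_zsmul, ← map_sum, hcol, linearForm, Fintype.linearCombination_apply_single,
    one_smul]

theorem adjoin_image_eq_belowLevel {Φ : Matrix ι ι ℤ} (hΦ : IsUnit Φ.det)
    {g : ι × ℕ+ → 𝔸}
    (hg : ∀ w, g w - linearForm w.2 (fun j => Φ j w.1) ∈ belowLevel w.2) (n : ℕ) :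
    Algebra.adjoin ℤ (g '' {w | (w.2 : ℕ) < n}) = belowLevel n := by
  induction n with
  | zero => simp [belowLevel]
  | succ n ih =>
    refine le_antisymm (Algebra.adjoin_le ?_) (Algebra.adjoin_le ?_)
    · rintro _ ⟨w, hw, rfl⟩
      rw [← sub_add_cancel (g w) (linearForm w.2 fun j => Φ j w.1)]
      exact add_mem (belowLevel_mono hw.le (hg w)) (linearForm_mem_belowLevel _ hw)
    · rintro _ ⟨⟨j, m⟩, hm, rfl⟩
      rw [← sum_inv_smul_linearForm_col hΦ]
      refine Subalgebra.sum_mem _ fun k _ => zsmul_mem ?_ _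
      rw [← sub_sub_cancel (g (k, m)) (linearForm m fun i => Φ i k)]
      have hlower : belowLevel m ≤ Algebra.adjoin ℤ (g '' {w | (w.2 : ℕ) < n + 1}) :=
        (belowLevel_mono (Nat.lt_succ_iff.mp hm)).trans
          (ih ▸ Algebra.adjoin_mono (Set.image_mono fun w hw => Nat.lt_succ_of_lt hw))
      exact sub_mem (Algebra.subset_adjoin ⟨(k, m), hm, rfl⟩) (hlower (hg (k, m)))

end LevelFiltration

theorem stmt10_general (p : ℕ) (N M : ℕ)
    (Φ : Matrix (Fin N) (Fin N) ℤ) (hΦ : IsUnit Φ.det)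
    (F : Fin N → (PowerSeries (MvPolynomial (Fin N × ℕ+) ℚ))ˣ)
    (hF : ∀ j : Fin N, (F j : PowerSeries (MvPolynomial (Fin N × ℕ+) ℚ)) =
      PowerSeries.mk fun i => if h : 0 < i then MvPolynomial.X (j, ⟨i, h⟩) else 1)
    (X Y : Fin N → PowerSeries (MvPolynomial (Fin N × ℕ+) ℚ))
    (hX : ∀ k : Fin N, X k =
      ((∏ j : Fin N, F j ^ (Φ j k) : (PowerSeries (MvPolynomial (Fin N × ℕ+) ℚ))ˣ) :
        PowerSeries (MvPolynomial (Fin N × ℕ+) ℚ)))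
    (hY : ∀ k : Fin N, (k : ℕ) < M →
      Y k * pSingularPart p (X k) = pRegularPart p (X k)) :
    (Algebra.adjoin ℤ
        (Set.range (MvPolynomial.X : Fin N × ℕ+ → MvPolynomial (Fin N × ℕ+) ℚ)) :
        Set (MvPolynomial (Fin N × ℕ+) ℚ)) ∩
      (Algebra.adjoin ℚ
        {a : MvPolynomial (Fin N × ℕ+) ℚ | ∃ k : Fin N, (k : ℕ) < M ∧ ∃ n : ℕ,
          1 ≤ n ∧ ¬ p ∣ n ∧ a = PowerSeries.coeff n (Y k)} :
        Set (MvPolynomial (Fin N × ℕ+) ℚ)) =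
    (Algebra.adjoin ℤ
        {a : MvPolynomial (Fin N × ℕ+) ℚ | ∃ k : Fin N, (k : ℕ) < M ∧ ∃ n : ℕ,
          1 ≤ n ∧ ¬ p ∣ n ∧ a = PowerSeries.coeff n (Y k)} :
        Set (MvPolynomial (Fin N × ℕ+) ℚ)) := by
  set T : Set (Fin N × ℕ+) := {w | (w.1 : ℕ) < M ∧ ¬ p ∣ w.2}
  let g (w : Fin N × ℕ+) : MvPolynomial (Fin N × ℕ+) ℚ :=
    if w ∈ T then coeff w.2 (Y w.1) else coeff w.2 (X w.1)
  have hXlin (k : Fin N) : LevelFiltration.HasLinearPart (X k) fun j => Φ j k :=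
    hX k ▸ LevelFiltration.hasLinearPart_prod_zpow
      (fun j => hF j ▸ LevelFiltration.hasLinearPart_generatingSeries j) _
  have hg (w : Fin N × ℕ+) : g w - LevelFiltration.linearForm w.2 (fun j => Φ j w.1) ∈
      LevelFiltration.belowLevel w.2 := by
    by_cases hw : w ∈ T
    · simpa [g, hw] using
        (hXlin w.1).coeff_sub_mem_of_mul_pSingularPart (hY w.1 hw.1) w.2 hw.2
    · simpa [g, hw] using (hXlin w.1).coeff_sub_mem w.2
  have hlevel := LevelFiltration.adjoin_image_eq_belowLevel hΦ hg
  have hgens : {a | ∃ k : Fin N, (k : ℕ) < M ∧ ∃ n : ℕ, 1 ≤ n ∧ ¬ p ∣ n ∧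
      a = coeff n (Y k)} = g '' T := by
    ext a
    constructor
    · rintro ⟨k, hk, n, hn, hpn, rfl⟩
      exact ⟨(k, ⟨n, hn⟩), ⟨hk, hpn⟩, if_pos ⟨hk, hpn⟩⟩
    · rintro ⟨w, hw, rfl⟩
      exact ⟨w.1, hw.1, w.2, w.2.pos, hw.2, if_pos hw⟩
  rw [hgens]
  exact MvPolynomial.adjoin_int_range_X_inter_adjoin_rat_image
    (LevelFiltration.aeval_injective_of_adjoin_image_eq_belowLevel hlevel)
    (LevelFiltration.adjoin_range_eq_adjoin_range_X hlevel) T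

/-- let `A = ℚ[x_{j,i} : j ∈ {1,…,N}, i ≥ 1]` (variables indexed by
`Fin N × ℕ+`), `Φ = (φ_{j,k}) ∈ GL_N(ℤ)`, and in `A⟦t⟧` let `F_j = 1 + Σ_{i≥1} x_{j,i} tⁱ`
(a unit, since its constant term is 1).  For `1 ≤ k ≤ M` put `X_k = Π_j F_j^{φ_{j,k}}`
(integer powers in the unit group), let `U_k`,`V_k` be its `p`-singular/`p`-regular parts
and `Y_k = V_k·U_k⁻¹ = Σ y_{k,n} tⁿ`.  Then, inside `A`,
`ℤ[x_{j,i}] ∩ ℚ[y_{k,n} : k ≤ M, p ∤ n] = ℤ[y_{k,n} : k ≤ M, p ∤ n]`. -/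
theorem stmt10 (p : ℕ) (hp : p.Prime) (N M : ℕ) (hM : 1 ≤ M) (hMN : M ≤ N)
    (Φ : Matrix (Fin N) (Fin N) ℤ) (hΦ : IsUnit Φ.det)
    (F : Fin N → (PowerSeries (MvPolynomial (Fin N × ℕ+) ℚ))ˣ)
    (hF : ∀ j : Fin N, (F j : PowerSeries (MvPolynomial (Fin N × ℕ+) ℚ)) =
      PowerSeries.mk fun i => if h : 0 < i then MvPolynomial.X (j, ⟨i, h⟩) else 1)
    (X Y : Fin N → PowerSeries (MvPolynomial (Fin N × ℕ+) ℚ))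
    (hX : ∀ k : Fin N, X k =
      ((∏ j : Fin N, F j ^ (Φ j k) : (PowerSeries (MvPolynomial (Fin N × ℕ+) ℚ))ˣ) :
        PowerSeries (MvPolynomial (Fin N × ℕ+) ℚ)))
    (hY : ∀ k : Fin N, (k : ℕ) < M →
      Y k * pSingularPart p (X k) = pRegularPart p (X k)) :
    (Algebra.adjoin ℤ
        (Set.range (MvPolynomial.X : Fin N × ℕ+ → MvPolynomial (Fin N × ℕ+) ℚ)) :
        Set (MvPolynomial (Fin N × ℕ+) ℚ)) ∩
      (Algebra.adjoin ℚ
        {a : MvPolynomial (Fin N × ℕ+) ℚ | ∃ k : Fin N, (k : ℕ) < M ∧ ∃ n : ℕ,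
          1 ≤ n ∧ ¬ p ∣ n ∧ a = PowerSeries.coeff n (Y k)} :
        Set (MvPolynomial (Fin N × ℕ+) ℚ)) =
    (Algebra.adjoin ℤ
        {a : MvPolynomial (Fin N × ℕ+) ℚ | ∃ k : Fin N, (k : ℕ) < M ∧ ∃ n : ℕ,
          1 ≤ n ∧ ¬ p ∣ n ∧ a = PowerSeries.coeff n (Y k)} :
        Set (MvPolynomial (Fin N × ℕ+) ℚ)) :=
  stmt10_general p N M Φ hΦ F hF X Y hX hY
end

section
/- Let σ be a finite type, and in MvPolynomial σ ℚ let h_n denote the complete homogeneous symmetric polynomial of degree n, i.e. the sum of all monomials of total degree n: h_n = Σ_{i_1 ≤ … ≤ i_n} X_{i_1}···X_{i_n} (for a chosen linear order on σ; equivalently the sum of X^d over all functions d : σ → ℕ with total degree n), and let p_i = Σ_{j∈σ} X_j^i be the i-th power sum. Then for every n ≥ 0, h_n = Σ_{λ ⊢ n} ∏_{i≥1} p_i^{m_i(λ)} / (m_i(λ)!·i^{m_i(λ)}), where the sum runs over all partitions λ of n and m_i(λ) denotes the number of parts of λ equal to i. -/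
/-!
Both sides satisfy Newton's recurrence `n hₙ = ∑_{i=1}^n pᵢ hₙ₋ᵢ` with initial value `1`, and
this recurrence determines the sequence over `ℚ`. For `hₙ` it is a coefficient count: `X^d`
with `|d| = n` arises from `X_jⁱ · X^(d - i eⱼ)` exactly once for each `j` and `1 ≤ i ≤ d j`.
For the partition sum, `pᵢ z_μ⁻¹ p_μ = i mᵢ(λ) z_λ⁻¹ p_λ` when `λ = μ ∪ {i}`, and summing over
the parts of `λ` recovers `∑ᵢ i mᵢ(λ) = n`.
-/

open Finset MvPolynomial Nat

lemma eq_of_nsmul_recurrence {A : Type*} [Semiring A] [IsAddTorsionFree A] (c : ℕ → A)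
    {f g : ℕ → A} (h0 : f 0 = g 0) (hf : ∀ n, n • f n = ∑ i ∈ Icc 1 n, c i * f (n - i))
    (hg : ∀ n, n • g n = ∑ i ∈ Icc 1 n, c i * g (n - i)) : f = g := by
  funext n
  induction n using Nat.strong_induction_on with
  | _ n ih =>
    rcases n with _ | n
    · exact h0
    · refine nsmul_right_injective n.succ_ne_zero ?_
      simp only [hf, hg]
      exact sum_congr rfl fun i hi => by rw [ih (n + 1 - i) (Nat.sub_lt n.succ_pos (mem_Icc.1 hi).1)]

section CompleteHomogeneous

variable (σ R : Type*) [Fintype σ] [DecidableEq σ] [CommSemiring R]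

noncomputable def completeHomogeneous (n : ℕ) : MvPolynomial σ R :=
  ∑ d ∈ (univ : Finset σ).finsuppAntidiag n, monomial d 1

variable {σ R}

lemma completeHomogeneous_zero : completeHomogeneous σ R 0 = 1 := by
  simp [completeHomogeneous]

lemma coeff_completeHomogeneous (n : ℕ) (d : σ →₀ ℕ) :
    coeff d (completeHomogeneous σ R n) = if d.degree = n then 1 else 0 := by
  simp [completeHomogeneous, coeff_sum, coeff_monomial, Finsupp.degree_eq_sum]

lemma coeff_X_pow_mul_completeHomogeneous {n i : ℕ} (hi : i ≤ n) (j : σ) (d : σ →₀ ℕ) :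
    coeff d (X j ^ i * completeHomogeneous σ R (n - i)) =
      if i ≤ d j ∧ d.degree = n then 1 else 0 := by
  rw [X_pow_eq_monomial, coeff_monomial_mul', one_mul]
  by_cases hij : i ≤ d j
  · have hle : Finsupp.single j i ≤ d := Finsupp.single_le_iff.2 hij
    have hdeg : (d - Finsupp.single j i).degree + i = d.degree := by
      nth_rw 2 [← Finsupp.degree_single j i]
      rw [← map_add, tsub_add_cancel_of_le hle]
    rw [if_pos hle, coeff_completeHomogeneous]
    congr 1
    apply propext
    omega
  · rw [if_neg (by rwa [Finsupp.single_le_iff]), if_neg (by tauto)]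

lemma card_filter_Icc_le {a n : ℕ} (h : a ≤ n) : #{i ∈ Icc 1 n | i ≤ a} = a := by
  rw [show {i ∈ Icc 1 n | i ≤ a} = Icc 1 a by ext; simp only [mem_filter, mem_Icc]; omega, Nat.card_Icc]; omega

lemma nsmul_completeHomogeneous (n : ℕ) :
    n • completeHomogeneous σ R n =
      ∑ i ∈ Icc 1 n, psum σ R i * completeHomogeneous σ R (n - i) := by
  ext d
  simp only [coeff_smul, coeff_sum, psum, sum_mul, coeff_completeHomogeneous]
  rw [sum_congr rfl fun i hi => sum_congr rfl fun j _ =>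
    coeff_X_pow_mul_completeHomogeneous (mem_Icc.1 hi).2 j d]
  by_cases hdeg : d.degree = n
  · have hle : ∀ j, d j ≤ n := fun j => hdeg ▸ Finsupp.le_degree j d
    simp only [hdeg, and_true, if_true, nsmul_one]
    rw [sum_comm]
    simp only [sum_boole, card_filter_Icc_le (hle _)]
    rw [← Nat.cast_sum, ← Finsupp.degree_eq_sum, hdeg]
  · simp [hdeg]

end CompleteHomogeneous

namespace Nat.Partition

variable {n i : ℕ}

def eraseOfMem (p : n.Partition) (hi : i ∈ p.parts) : (n - i).Partition where
  parts := p.parts.erase i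
  parts_pos h := p.parts_pos (Multiset.mem_of_mem_erase h)
  parts_sum := by
    have h := p.parts_sum
    rw [← Multiset.cons_erase hi, Multiset.sum_cons] at h
    omega

def consOfLE (q : (n - i).Partition) (hi : 0 < i) (hin : i ≤ n) : n.Partition where
  parts := i ::ₘ q.parts
  parts_pos h := (Multiset.mem_cons.1 h).elim (fun h => h ▸ hi) q.parts_pos
  parts_sum := by rw [Multiset.sum_cons, q.parts_sum]; omega

lemma sum_sum_erase {M : Type*} [AddCommMonoid M] (n : ℕ) (g : ℕ → Multiset ℕ → M) :
    ∑ p : n.Partition, ∑ i ∈ p.parts.toFinset, g i (p.parts.erase i) =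
      ∑ i ∈ Icc 1 n, ∑ q : (n - i).Partition, g i q.parts := by
  rw [sum_sigma', sum_sigma']
  refine sum_bij' (fun x hx => ⟨x.2, x.1.eraseOfMem (Multiset.mem_toFinset.1 (mem_sigma.1 hx).2)⟩)
    (fun y hy => ⟨consOfLE y.2 (mem_Icc.1 (mem_sigma.1 hy).1).1 (mem_Icc.1 (mem_sigma.1 hy).1).2,
      y.1⟩) ?_ ?_ ?_ ?_ ?_
  · rintro ⟨p, i⟩ hx
    have hi := Multiset.mem_toFinset.1 (mem_sigma.1 hx).2
    simpa using ⟨p.parts_pos hi, p.le_of_mem_parts hi⟩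
  · rintro ⟨i, q⟩ -
    simp [consOfLE]
  · rintro ⟨p, i⟩ hx
    exact Sigma.ext (Nat.Partition.ext (Multiset.cons_erase
      (Multiset.mem_toFinset.1 (mem_sigma.1 hx).2))) HEq.rfl
  · rintro ⟨i, q⟩ -
    exact Sigma.ext rfl (heq_of_eq (Nat.Partition.ext (Multiset.erase_cons_head i q.parts)))
  · intros; rfl

end Nat.Partition

namespace Multiset

/-- `z_λ`, the order of the centralizer of a permutation of cycle type `λ`. -/
def centralizerCard (s : Multiset ℕ) : ℕ := ∏ i ∈ s.toFinset, (count i s)! * i ^ count i s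

lemma centralizerCard_eq_prod_of_subset {s : Multiset ℕ} {F : Finset ℕ} (h : s.toFinset ⊆ F) :
    centralizerCard s = ∏ i ∈ F, (count i s)! * i ^ count i s :=
  prod_subset h fun i _ hi => by simp [count_eq_zero.2 (by simpa using hi)]

lemma centralizerCard_cons (i : ℕ) (s : Multiset ℕ) :
    centralizerCard (i ::ₘ s) = i * (count i s + 1) * centralizerCard s := by
  have hs : s.toFinset ⊆ insert i s.toFinset := subset_insert _ _
  have his : (i ::ₘ s).toFinset ⊆ insert i s.toFinset := by simp
  rw [centralizerCard_eq_prod_of_subset hs, centralizerCard_eq_prod_of_subset his,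
    ← mul_prod_erase _ _ (mem_insert_self i _), ← mul_prod_erase _ _ (mem_insert_self i _),
    prod_congr rfl fun a ha => by rw [count_cons_of_ne (ne_of_mem_erase ha)], count_cons_self,
    factorial_succ, pow_succ]
  ring

end Multiset

section PowerSumExpansion

variable (σ K : Type*) [Fintype σ] [Field K]

noncomputable def psumWeight (s : Multiset ℕ) : MvPolynomial σ K :=
  (s.centralizerCard : K)⁻¹ • (s.map (psum σ K)).prod

noncomputable def psumExpansion (n : ℕ) : MvPolynomial σ K :=
  ∑ p : n.Partition, psumWeight σ K p.parts

variable {σ K}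

lemma psumWeight_eq_prod_of_subset {s : Multiset ℕ} {F : Finset ℕ} (h : s.toFinset ⊆ F) :
    psumWeight σ K s = ∏ i ∈ F,
      (((s.count i)! * i ^ s.count i : ℕ) : K)⁻¹ • psum σ K i ^ s.count i := by
  rw [prod_smul, prod_inv_distrib, ← Nat.cast_prod, ← Multiset.centralizerCard_eq_prod_of_subset h,
    psumWeight, prod_multiset_map_count,
    prod_subset h fun i _ hi => by simp [Multiset.count_eq_zero.2 (by simpa using hi)]]

lemma psum_mul_psumWeight [CharZero K] {i : ℕ} (hi : i ≠ 0) (s : Multiset ℕ) :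
    psum σ K i * psumWeight σ K s = (i * (s.count i + 1)) • psumWeight σ K (i ::ₘ s) := by
  have hc : ((i * (s.count i + 1) : ℕ) : K) ≠ 0 := Nat.cast_ne_zero.2 (by positivity)
  rw [psumWeight, psumWeight, Multiset.centralizerCard_cons, Multiset.map_cons, Multiset.prod_cons,
    ← Nat.cast_smul_eq_nsmul K, smul_smul, Nat.cast_mul (i * _), mul_inv, ← mul_assoc,
    mul_inv_cancel₀ hc, one_mul, mul_smul_comm]

lemma psumExpansion_zero : psumExpansion σ K 0 = 1 := by
  simp [psumExpansion, psumWeight, Multiset.centralizerCard]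

lemma nsmul_psumWeight_parts [CharZero K] {n : ℕ} (p : n.Partition) :
    n • psumWeight σ K p.parts =
      ∑ i ∈ p.parts.toFinset, psum σ K i * psumWeight σ K (p.parts.erase i) := by
  have hterm : ∀ i ∈ p.parts.toFinset, psum σ K i * psumWeight σ K (p.parts.erase i) =
      (p.parts.count i • i) • psumWeight σ K p.parts := by
    intro i hi
    have hmem := Multiset.mem_toFinset.1 hi
    rw [psum_mul_psumWeight (p.parts_pos hmem).ne', Multiset.cons_erase hmem,
      Multiset.count_erase_self, Nat.sub_add_cancel (Multiset.one_le_count_iff_mem.2 hmem),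
      smul_eq_mul, mul_comm]
  rw [sum_congr rfl hterm, ← sum_smul, ← sum_multiset_count, p.parts_sum]

lemma nsmul_psumExpansion [CharZero K] (n : ℕ) :
    n • psumExpansion σ K n = ∑ i ∈ Icc 1 n, psum σ K i * psumExpansion σ K (n - i) := by
  simp only [psumExpansion, Finset.smul_sum, nsmul_psumWeight_parts, mul_sum]
  exact Nat.Partition.sum_sum_erase n fun i t => psum σ K i * psumWeight σ K t

end PowerSumExpansion

/-- for a finite type `σ`, let `hₙ ∈ MvPolynomial σ ℚ` be the complete
homogeneous symmetric polynomial of degree `n` (the sum of the monomials `X^d` over all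
exponent functions `d : σ →₀ ℕ` of total degree `n`) and `pᵢ = Σ_j X_jⁱ` the `i`-th power
sum.  Then `hₙ = Σ_{λ ⊢ n} Π_{i≥1} pᵢ^{mᵢ(λ)} / (mᵢ(λ)! · i^{mᵢ(λ)})`, the sum running
over partitions `λ` of `n`, where `mᵢ(λ)` is the number of parts of `λ` equal to `i`
(parts of a partition of `n` lie in `[1,n]`, so the product over `i ∈ [1,n]` suffices). -/
theorem stmt13 (σ : Type*) [Fintype σ] [DecidableEq σ] (n : ℕ)
    (h : MvPolynomial σ ℚ)
    (hh : h = ∑ d ∈ (Finset.univ : Finset σ).finsuppAntidiag n,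
      MvPolynomial.monomial d (1 : ℚ)) :
    h = ∑ lam : Nat.Partition n, ∏ i ∈ Finset.Icc 1 n,
      ((((Multiset.count i lam.parts).factorial *
          i ^ (Multiset.count i lam.parts) : ℕ) : ℚ)⁻¹) •
        MvPolynomial.psum σ ℚ i ^ (Multiset.count i lam.parts) := by
  have hnewton : completeHomogeneous σ ℚ = psumExpansion σ ℚ :=
    eq_of_nsmul_recurrence (psum σ ℚ) (by rw [completeHomogeneous_zero, psumExpansion_zero])
      nsmul_completeHomogeneous nsmul_psumExpansion
  have hparts (p : n.Partition) : p.parts.toFinset ⊆ Icc 1 n := fun i hi => by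
    have hmem := Multiset.mem_toFinset.1 hi
    exact mem_Icc.2 ⟨p.parts_pos hmem, p.le_of_mem_parts hmem⟩
  rw [hh, ← completeHomogeneous, hnewton, psumExpansion]
  exact sum_congr rfl fun p _ => psumWeight_eq_prod_of_subset (hparts p)
end
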